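/- arXiv:2112.14058 — 3 statements merged into one kernel-verified Lean document; each statement's English description precedes it below -/
import Mathlib

section
/- The finite powerset construction is a comonad on FinScottL: P_fin with counit ε_A = {(X, a) | ∃x ∈ X, a ≤_A x} and comultiplication δ_A = {(X, {Y_1,…,Y_n}) | Y_1 ∪ ⋯ ∪ Y_n ≤_{P_fin A} X} satisfies the comonad laws. -/
/-- Downward-closed relations (w.r.t. `A^op × B`): the morphisms of `FinScottL`. -/
def DCRel {A B : Type} (leA : A → A → Prop) (leB : B → B → Prop)
    (R : A → B → Prop) : Prop :=
  ∀ a a' b b', leA a a' → R a b → leB b' b → R a' b'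

/-- Relational composition, in diagrammatic order: `rcomp R S = S ∘ R`. -/
def rcomp {A B C : Type} (R : A → B → Prop) (S : B → C → Prop) : A → C → Prop :=
  fun a c => ∃ b, R a b ∧ S b c

/-- The identity `id_A = {(a', a) | a ≤_A a'}` of `FinScottL`. -/
def rid {A : Type} (leA : A → A → Prop) : A → A → Prop := fun a' a => leA a a'

/-- The preorder on `P_fin(A)`: `X ≤ Y` iff every element of `X` is below some
element of `Y`. -/
def pLE {A : Type} (leA : A → A → Prop) : Finset A → Finset A → Prop :=
  fun X Y => ∀ x ∈ X, ∃ y ∈ Y, leA x y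

/-- `P_fin` on morphisms. -/
def pmap {A B : Type} (R : A → B → Prop) : Finset A → Finset B → Prop :=
  fun X Y => ∀ y ∈ Y, ∃ x ∈ X, R x y

/-- The counit `ε_A = {(X, a) | ∃ x ∈ X, a ≤_A x}` of `P_fin`. -/
def peps {A : Type} (leA : A → A → Prop) : Finset A → A → Prop :=
  fun X a => ∃ x ∈ X, leA a x

/-- The comultiplication `δ_A = {(X, {Y₁,…,Yₙ}) | Y₁ ∪ ⋯ ∪ Yₙ ≤_{P_fin A} X}` of `P_fin`. -/
def pdelta {A : Type} [DecidableEq A] (leA : A → A → Prop) :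
    Finset A → Finset (Finset A) → Prop :=
  fun X Ys => pLE leA (Ys.biUnion id) X

/-- the finite powerset construction `P_fin`, with the counit `ε` and the
comultiplication `δ` above, is a comonad on `FinScottL`: it is functorial on
downward-closed relations, `ε` and `δ` are natural, and the comonad laws hold. -/
theorem pfin_is_comonad {A B C : Type}
    [Fintype A] [Fintype B] [Fintype C] [DecidableEq A] [DecidableEq B]
    (leA : A → A → Prop) (leB : B → B → Prop) (leC : C → C → Prop)
    (hA : IsPreorder A leA) (hB : IsPreorder B leB) (hC : IsPreorder C leC)
    (R : A → B → Prop) (S : B → C → Prop)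
    (hR : DCRel leA leB R) (hS : DCRel leB leC S) :
    -- functoriality
    DCRel (pLE leA) (pLE leB) (pmap R) ∧
    pmap (rid leA) = rid (pLE leA) ∧
    pmap (rcomp R S) = rcomp (pmap R) (pmap S) ∧
    -- naturality of ε and δ
    rcomp (pmap R) (peps leB) = rcomp (peps leA) R ∧
    rcomp (pmap R) (pdelta leB) = rcomp (pdelta leA) (pmap (pmap R)) ∧
    -- counit laws
    rcomp (pdelta leA) (peps (pLE leA)) = rid (pLE leA) ∧
    rcomp (pdelta leA) (pmap (peps leA)) = rid (pLE leA) ∧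
    -- coassociativity
    rcomp (pdelta leA) (pdelta (pLE leA)) = rcomp (pdelta leA) (pmap (pdelta leA)) := by
  classical
  have reflA : ∀ a, leA a a := hA.refl
  have transA : ∀ a b c, leA a b → leA b c → leA a c := hA.trans
  have reflB : ∀ b, leB b b := hB.refl
  refine ⟨?_, rfl, ?_, ?_, ?_, ?_, ?_, ?_⟩
  · -- functoriality on DCRel
    intro X X' Y Y' hXX' hXY hY'Y y' hy'
    obtain ⟨y, hy, hle⟩ := hY'Y y' hy'
    obtain ⟨x, hx, hRxy⟩ := hXY y hy
    obtain ⟨x', hx', hle'⟩ := hXX' x hx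
    exact ⟨x', hx', hR x x' y y' hle' hRxy hle⟩
  · -- pmap (rcomp R S) = rcomp (pmap R) (pmap S)
    funext X Z
    apply propext
    constructor
    · intro h
      refine ⟨Finset.univ.filter (fun b => ∃ x ∈ X, R x b), ?_, ?_⟩
      · intro y hy
        exact (Finset.mem_filter.mp hy).2
      · intro z hz
        obtain ⟨x, hx, b, hRb, hSb⟩ := h z hz
        exact ⟨b, Finset.mem_filter.mpr ⟨Finset.mem_univ _, x, hx, hRb⟩, hSb⟩
    · rintro ⟨Y, h1, h2⟩ z hz
      obtain ⟨y, hy, hSy⟩ := h2 z hz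
      obtain ⟨x, hx, hRx⟩ := h1 y hy
      exact ⟨x, hx, y, hRx, hSy⟩
  · -- naturality of ε
    funext X b
    apply propext
    constructor
    · rintro ⟨Y, h1, y, hy, hby⟩
      obtain ⟨x, hx, hRx⟩ := h1 y hy
      exact ⟨x, ⟨x, hx, reflA x⟩, hR x x y b (reflA x) hRx hby⟩
    · rintro ⟨a, ⟨x, hx, hax⟩, hab⟩
      exact ⟨{b}, fun y hy => by
        rw [Finset.mem_singleton] at hy
        exact ⟨x, hx, hy ▸ hR a x b b hax hab (reflB b)⟩,
        b, Finset.mem_singleton_self b, reflB b⟩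
  · -- naturality of δ
    funext X Zs
    apply propext
    constructor
    · rintro ⟨Y, h1, h2⟩
      refine ⟨{X}, ?_, ?_⟩
      · intro a ha
        rw [Finset.mem_biUnion] at ha
        obtain ⟨W, hW, haW⟩ := ha
        rw [Finset.mem_singleton] at hW
        exact ⟨a, hW ▸ haW, reflA a⟩
      · intro Z hZ
        refine ⟨X, Finset.mem_singleton_self X, ?_⟩
        intro z hz
        obtain ⟨y, hy, hzy⟩ := h2 z (Finset.mem_biUnion.mpr ⟨Z, hZ, hz⟩)
        obtain ⟨x, hx, hRx⟩ := h1 y hy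
        exact ⟨x, hx, hR x x y z (reflA x) hRx hzy⟩
    · rintro ⟨Ys, h1, h2⟩
      refine ⟨Zs.biUnion id, ?_, ?_⟩
      · intro b hb
        obtain ⟨Z, hZ, hbZ⟩ := Finset.mem_biUnion.mp hb
        obtain ⟨Y, hY, hYZ⟩ := h2 Z hZ
        obtain ⟨y, hy, hRy⟩ := hYZ b hbZ
        obtain ⟨x, hx, hyx⟩ := h1 y (Finset.mem_biUnion.mpr ⟨Y, hY, hy⟩)
        exact ⟨x, hx, hR y x b b hyx hRy (reflB b)⟩
      · exact fun b hb => ⟨b, hb, reflB b⟩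
  · -- counit law 1
    funext X X'
    apply propext
    constructor
    · rintro ⟨Ys, hU, Y, hY, hX'Y⟩ x' hx'
      obtain ⟨y, hy, hx'y⟩ := hX'Y x' hx'
      obtain ⟨x, hx, hyx⟩ := hU y (Finset.mem_biUnion.mpr ⟨Y, hY, hy⟩)
      exact ⟨x, hx, transA x' y x hx'y hyx⟩
    · intro h
      refine ⟨{X'}, ?_, X', Finset.mem_singleton_self X',
        fun a ha => ⟨a, ha, reflA a⟩⟩
      intro a ha
      obtain ⟨W, hW, haW⟩ := Finset.mem_biUnion.mp ha
      rw [Finset.mem_singleton] at hW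
      exact h a (hW ▸ haW)
  · -- counit law 2
    funext X X'
    apply propext
    constructor
    · rintro ⟨Ys, hU, h2⟩ a ha
      obtain ⟨Y, hY, x, hx, hax⟩ := h2 a ha
      obtain ⟨x', hx', hxx'⟩ := hU x (Finset.mem_biUnion.mpr ⟨Y, hY, hx⟩)
      exact ⟨x', hx', transA a x x' hax hxx'⟩
    · intro h
      refine ⟨{X}, ?_, ?_⟩
      · intro a ha
        obtain ⟨W, hW, haW⟩ := Finset.mem_biUnion.mp ha
        rw [Finset.mem_singleton] at hW
        exact ⟨a, hW ▸ haW, reflA a⟩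
      · intro a ha
        obtain ⟨x, hx, hax⟩ := h a ha
        exact ⟨X, Finset.mem_singleton_self X, x, hx, hax⟩
  · -- coassociativity
    funext X Yss
    apply propext
    constructor
    · rintro ⟨Ys, h1, h2⟩
      refine ⟨{(Yss.biUnion id).biUnion id}, ?_, ?_⟩
      · intro a ha
        obtain ⟨W, hW, haW⟩ := Finset.mem_biUnion.mp ha
        rw [Finset.mem_singleton] at hW
        subst hW
        obtain ⟨Y, hY, haY⟩ := Finset.mem_biUnion.mp haW
        obtain ⟨Ys', hYs', hYYs'⟩ := Finset.mem_biUnion.mp hY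
        obtain ⟨Y', hY', hYY'⟩ := h2 Y (Finset.mem_biUnion.mpr ⟨Ys', hYs', hYYs'⟩)
        obtain ⟨a', ha', haa'⟩ := hYY' a haY
        obtain ⟨x, hx, ha'x⟩ := h1 a' (Finset.mem_biUnion.mpr ⟨Y', hY', ha'⟩)
        exact ⟨x, hx, transA a a' x haa' ha'x⟩
      · intro Ys' hYs'
        refine ⟨(Yss.biUnion id).biUnion id,
          Finset.mem_singleton_self _, ?_⟩
        intro a ha
        obtain ⟨Y, hY, haY⟩ := Finset.mem_biUnion.mp ha
        exact ⟨a, Finset.mem_biUnion.mpr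
          ⟨Y, Finset.mem_biUnion.mpr ⟨Ys', hYs', hY⟩, haY⟩, reflA a⟩
    · rintro ⟨Ys, h1, h2⟩
      refine ⟨{(Yss.biUnion id).biUnion id}, ?_, ?_⟩
      · intro a ha
        obtain ⟨W, hW, haW⟩ := Finset.mem_biUnion.mp ha
        rw [Finset.mem_singleton] at hW
        subst hW
        obtain ⟨Y, hY, haY⟩ := Finset.mem_biUnion.mp haW
        obtain ⟨Ys', hYs', hYYs'⟩ := Finset.mem_biUnion.mp hY
        obtain ⟨Y', hY', hdel⟩ := h2 Ys' hYs'
        obtain ⟨a', ha', haa'⟩ := hdel a (Finset.mem_biUnion.mpr ⟨Y, hYYs', haY⟩)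
        obtain ⟨x, hx, ha'x⟩ := h1 a' (Finset.mem_biUnion.mpr ⟨Y', hY', ha'⟩)
        exact ⟨x, hx, transA a a' x haa' ha'x⟩
      · intro Y hY
        obtain ⟨Ys', hYs', hYYs'⟩ := Finset.mem_biUnion.mp hY
        refine ⟨(Yss.biUnion id).biUnion id, Finset.mem_singleton_self _, ?_⟩
        intro a haY
        exact ⟨a, Finset.mem_biUnion.mpr
          ⟨Y, Finset.mem_biUnion.mpr ⟨Ys', hYs', hYYs'⟩, haY⟩, reflA a⟩
end

section
/- The coloring construction □_M is a comonad on FinScottL: □_M with counit ε_A = {((0, a), a') | a' ≤_A a} and comultiplication δ_A = {((max(p,q), a), (p, (q, a'))) | a' ≤_A a} satisfies the comonad laws. -/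
/-- The preorder on `□_M(A) = {0,…,M} × A`. -/
def bLE {A : Type} (M : ℕ) (leA : A → A → Prop) :
    (Fin (M + 1) × A) → (Fin (M + 1) × A) → Prop :=
  fun x y => x.1 = y.1 ∧ leA x.2 y.2

/-- `□_M` on morphisms. -/
def bmap {A B : Type} (M : ℕ) (R : A → B → Prop) :
    (Fin (M + 1) × A) → (Fin (M + 1) × B) → Prop :=
  fun x y => x.1 = y.1 ∧ R x.2 y.2

/-- The counit `ε_A = {((0, a), a') | a' ≤_A a}` of `□_M`. -/
def beps {A : Type} (M : ℕ) (leA : A → A → Prop) : (Fin (M + 1) × A) → A → Prop :=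
  fun x a' => x.1 = 0 ∧ leA a' x.2

/-- The comultiplication `δ_A = {((max(p,q), a), (p, (q, a'))) | a' ≤_A a}` of `□_M`. -/
def bdelta {A : Type} (M : ℕ) (leA : A → A → Prop) :
    (Fin (M + 1) × A) → (Fin (M + 1) × (Fin (M + 1) × A)) → Prop :=
  fun x y => x.1 = max y.1 y.2.1 ∧ leA y.2.2 x.2

/-- the coloring construction `□_M`, with the counit `ε` and the
comultiplication `δ` above, is a comonad on `FinScottL`: it is functorial on
downward-closed relations, `ε` and `δ` are natural, and the comonad laws hold. -/
theorem coloring_is_comonad {A B C : Type} (M : ℕ)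
    [Fintype A] [Fintype B] [Fintype C]
    (leA : A → A → Prop) (leB : B → B → Prop) (leC : C → C → Prop)
    (hA : IsPreorder A leA) (hB : IsPreorder B leB) (hC : IsPreorder C leC)
    (R : A → B → Prop) (S : B → C → Prop)
    (hR : DCRel leA leB R) (hS : DCRel leB leC S) :
    -- functoriality
    DCRel (bLE M leA) (bLE M leB) (bmap M R) ∧
    bmap M (rid leA) = rid (bLE M leA) ∧
    bmap M (rcomp R S) = rcomp (bmap M R) (bmap M S) ∧
    -- naturality of ε and δ
    rcomp (bmap M R) (beps M leB) = rcomp (beps M leA) R ∧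
    rcomp (bmap M R) (bdelta M leB) = rcomp (bdelta M leA) (bmap M (bmap M R)) ∧
    -- counit laws
    rcomp (bdelta M leA) (beps M (bLE M leA)) = rid (bLE M leA) ∧
    rcomp (bdelta M leA) (bmap M (beps M leA)) = rid (bLE M leA) ∧
    -- coassociativity
    rcomp (bdelta M leA) (bdelta M (bLE M leA)) =
      rcomp (bdelta M leA) (bmap M (bdelta M leA)) := by
  have rA : ∀ a, leA a a := hA.refl
  have tA : ∀ {a b c}, leA a b → leA b c → leA a c := fun h1 h2 => hA.trans _ _ _ h1 h2
  have rB : ∀ b, leB b b := hB.refl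
  refine ⟨?_, ?_, ?_, ?_, ?_, ?_, ?_, ?_⟩
  · rintro x x' y y' ⟨hx1, hx2⟩ ⟨hxy1, hxy2⟩ ⟨hy1, hy2⟩
    exact ⟨hx1 ▸ hy1 ▸ hxy1, hR _ _ _ _ hx2 hxy2 hy2⟩
  · funext x y
    exact propext ⟨fun ⟨h1, h2⟩ => ⟨h1.symm, h2⟩, fun ⟨h1, h2⟩ => ⟨h1.symm, h2⟩⟩
  · funext x z
    refine propext ⟨?_, ?_⟩
    · rintro ⟨h1, b, hb1, hb2⟩
      exact ⟨(x.1, b), ⟨rfl, hb1⟩, h1, hb2⟩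
    · rintro ⟨y, ⟨h1, h2⟩, h3, h4⟩
      exact ⟨h1.trans h3, y.2, h2, h4⟩
  · funext x b'
    refine propext ⟨?_, ?_⟩
    · rintro ⟨y, ⟨h1, h2⟩, h3, h4⟩
      exact ⟨x.2, ⟨h1.trans h3, rA _⟩, hR _ _ _ _ (rA _) h2 h4⟩
    · rintro ⟨a', ⟨h1, h2⟩, h3⟩
      exact ⟨(x.1, b'), ⟨rfl, hR _ _ _ _ h2 h3 (rB _)⟩, h1, rB _⟩
  · funext x z
    refine propext ⟨?_, ?_⟩
    · rintro ⟨y, ⟨h1, h2⟩, h3, h4⟩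
      exact ⟨(z.1, (z.2.1, x.2)), ⟨h1.trans h3, rA _⟩,
        rfl, rfl, hR _ _ _ _ (rA _) h2 h4⟩
    · rintro ⟨w, ⟨h1, h2⟩, h3, h4, h5⟩
      exact ⟨(x.1, z.2.2), ⟨rfl, hR _ _ _ _ h2 h5 (rB _)⟩,
        by rw [h1, h3, h4], rB _⟩
  · funext x y'
    refine propext ⟨?_, ?_⟩
    · rintro ⟨w, ⟨h1, h2⟩, h3, h4, h5⟩
      refine ⟨?_, tA h5 h2⟩
      rw [h4, h1, h3, max_eq_right (Fin.zero_le _)]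
    · rintro ⟨h1, h2⟩
      exact ⟨(0, (x.1, x.2)), ⟨(max_eq_right (Fin.zero_le _)).symm, rA _⟩,
        rfl, h1, h2⟩
  · funext x y'
    refine propext ⟨?_, ?_⟩
    · rintro ⟨w, ⟨h1, h2⟩, h3, h4, h5⟩
      refine ⟨?_, tA h5 h2⟩
      rw [← h3, h1, h4, max_eq_left (Fin.zero_le _)]
    · rintro ⟨h1, h2⟩
      exact ⟨(x.1, (0, x.2)), ⟨(max_eq_left (Fin.zero_le _)).symm, rA _⟩,
        h1.symm, rfl, h2⟩
  · funext x z
    refine propext ⟨?_, ?_⟩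
    · rintro ⟨w, ⟨h1, h2⟩, h3, h4, h5⟩
      exact ⟨(z.1, (max z.2.1 z.2.2.1, x.2)),
        ⟨by rw [h1, h3, ← h4, max_assoc], rA _⟩, rfl, rfl, tA h5 h2⟩
    · rintro ⟨w, ⟨h1, h2⟩, h3, h4, h5⟩
      exact ⟨(max z.1 z.2.1, (z.2.2.1, x.2)),
        ⟨by rw [h1, h3, h4, max_assoc], rA _⟩, rfl, rfl, tA h5 h2⟩
end

section
/- The family λ_A = {(X, (p, Y)) ∈ P({0,…,M} × |A|) × ({0,…,M} × P(|A|)) | ∀y ∈ Y ∃a, (p, a) ∈ X ∧ y ≤_A a} is a distributive law of the comonad P_fin over the comonad □_M on FinScottL, i.e., λ : P_fin ∘ □_M ⇒ □_M ∘ P_fin is natural and compatible with the counits and comultiplications of both comonads. -/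
/-- The distributive law `λ_A : P_fin(□_M A) ⇸ □_M(P_fin A)`. -/
def lamDL {A : Type} (M : ℕ) (leA : A → A → Prop) :
    Finset (Fin (M + 1) × A) → (Fin (M + 1) × Finset A) → Prop :=
  fun X y => ∀ a' ∈ y.2, ∃ a, (y.1, a) ∈ X ∧ leA a' a

private lemma mem_of_fst_eq {α β : Type} [DecidableEq α] [DecidableEq β]
    {X : Finset (α × β)} {x : α × β} (hx : x ∈ X) {q : α} (h : x.1 = q) :
    (q, x.2) ∈ X := by
  rwa [← h, Prod.mk.eta]

/-- `λ` is a distributive law of the comonad `P_fin` over the comonad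
`□_M` on `FinScottL`: it is natural and compatible with the counits and
comultiplications of both comonads. -/
theorem lam_is_distributive_law {A B : Type} (M : ℕ)
    [Fintype A] [Fintype B] [DecidableEq A] [DecidableEq B]
    (leA : A → A → Prop) (leB : B → B → Prop)
    (hA : IsPreorder A leA) (hB : IsPreorder B leB)
    (R : A → B → Prop) (hR : DCRel leA leB R) :
    -- naturality:  □P(R) ∘ λ_A = λ_B ∘ P□(R)
    rcomp (pmap (bmap M R)) (lamDL M leB) = rcomp (lamDL M leA) (bmap M (pmap R)) ∧
    -- compatibility with the counit of P_fin:  □(ε^P_A) ∘ λ_A = ε^P_{□A}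
    rcomp (lamDL M leA) (bmap M (peps leA)) = peps (bLE M leA) ∧
    -- compatibility with the counit of □_M:  ε^□_{PA} ∘ λ_A = P(ε^□_A)
    rcomp (lamDL M leA) (beps M (pLE leA)) = pmap (beps M leA) ∧
    -- compatibility with the comultiplication of □_M:
    --   δ^□_{PA} ∘ λ_A = □(λ_A) ∘ λ_{□A} ∘ P(δ^□_A)
    rcomp (pmap (bdelta M leA)) (rcomp (lamDL M (bLE M leA)) (bmap M (lamDL M leA))) =
      rcomp (lamDL M leA) (bdelta M (pLE leA)) ∧
    -- compatibility with the comultiplication of P_fin: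
    --   □(δ^P_A) ∘ λ_A = λ_{PA} ∘ P(λ_A) ∘ δ^P_{□A}
    rcomp (pdelta (bLE M leA)) (rcomp (pmap (lamDL M leA)) (lamDL M (pLE leA))) =
      rcomp (lamDL M leA) (bmap M (pdelta leA)) := by

  have Atr := hA.trans
  have Arf := hA.refl
  refine ⟨?_, ?_, ?_, ?_, ?_⟩
  -- Part 1: naturality
  · funext X z
    obtain ⟨q, Z⟩ := z
    apply propext
    simp only [rcomp, pmap, bmap, lamDL]
    constructor
    · rintro ⟨Y, hXY, hYZ⟩
      have key : ∀ b, b ∈ Z → ∃ a, (q, a) ∈ X ∧ R a b := by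
        intro b hb
        obtain ⟨b', hb'Y, hbb'⟩ := hYZ b hb
        obtain ⟨x, hxX, hx1, hxR⟩ := hXY (q, b') hb'Y
        have hx1' : x.1 = q := hx1
        exact ⟨x.2, mem_of_fst_eq hxX hx1', hR _ _ _ _ (Arf _) hxR hbb'⟩
      choose f hf1 hf2 using key
      refine ⟨(q, Z.attach.image fun b => f b.1 b.2), ?_, rfl, ?_⟩
      · intro a' ha'
        obtain ⟨⟨b, hb⟩, -, rfl⟩ := Finset.mem_image.mp ha'
        exact ⟨f b hb, hf1 b hb, Arf _⟩
      · intro b hb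
        exact ⟨f b hb, Finset.mem_image.mpr ⟨⟨b, hb⟩, Finset.mem_attach _ _, rfl⟩,
          hf2 b hb⟩
    · rintro ⟨⟨p, W⟩, hXW, hpq, hWZ⟩
      simp only at hpq hWZ hXW
      subst hpq
      refine ⟨Z.image fun b => (p, b), ?_, ?_⟩
      · intro y hy
        obtain ⟨b, hb, rfl⟩ := Finset.mem_image.mp hy
        obtain ⟨a, haW, haR⟩ := hWZ b hb
        obtain ⟨a', ha'X, haa'⟩ := hXW a haW
        exact ⟨(p, a'), ha'X, rfl, hR _ _ _ _ haa' haR (hB.refl _)⟩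
      · intro b hb
        exact ⟨b, Finset.mem_image.mpr ⟨b, hb, rfl⟩, hB.refl _⟩
  -- Part 2: counit of P_fin
  · funext X z
    obtain ⟨q, a⟩ := z
    apply propext
    simp only [rcomp, lamDL, bmap, peps, bLE]
    constructor
    · rintro ⟨⟨p, W⟩, hXW, hpq, w, hwW, haw⟩
      simp only at hpq hXW hwW haw
      subst hpq
      obtain ⟨a', ha'X, hwa'⟩ := hXW w hwW
      exact ⟨(p, a'), ha'X, rfl, Atr _ _ _ haw hwa'⟩
    · rintro ⟨x, hxX, hx1, hax⟩
      have hx1' : x.1 = q := hx1.symm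
      refine ⟨(q, {x.2}), ?_, rfl, x.2, Finset.mem_singleton_self _, hax⟩
      intro a' ha'
      rw [Finset.mem_singleton] at ha'
      subst ha'
      exact ⟨x.2, mem_of_fst_eq hxX hx1', Arf _⟩
  -- Part 3: counit of box
  · funext X Z
    apply propext
    simp only [rcomp, lamDL, beps, pLE, pmap]
    constructor
    · rintro ⟨⟨p, W⟩, hXW, hp0, hZW⟩
      simp only at hp0 hXW hZW
      subst hp0
      intro a ha
      obtain ⟨w, hwW, haw⟩ := hZW a ha
      obtain ⟨a', ha'X, hwa'⟩ := hXW w hwW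
      exact ⟨((0 : Fin (M+1)), a'), ha'X, rfl, Atr _ _ _ haw hwa'⟩
    · intro h
      have key : ∀ a, a ∈ Z → ∃ a', ((0 : Fin (M+1)), a') ∈ X ∧ leA a a' := by
        intro a ha
        obtain ⟨x, hxX, hx1, hax⟩ := h a ha
        exact ⟨x.2, mem_of_fst_eq hxX hx1, hax⟩
      choose f hf1 hf2 using key
      refine ⟨((0 : Fin (M+1)), Z.attach.image fun a => f a.1 a.2), ?_, rfl, ?_⟩
      · intro a' ha'
        obtain ⟨⟨a, ha⟩, -, rfl⟩ := Finset.mem_image.mp ha'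
        exact ⟨f a ha, hf1 a ha, Arf _⟩
      · intro a ha
        exact ⟨f a ha, Finset.mem_image.mpr ⟨⟨a, ha⟩, Finset.mem_attach _ _, rfl⟩,
          hf2 a ha⟩
  -- Part 4: comultiplication of box
  · funext X z
    obtain ⟨p, q, Z⟩ := z
    apply propext
    simp only [rcomp, pmap, bdelta, lamDL, bmap, bLE, pLE]
    constructor
    · rintro ⟨Y, hXY, ⟨p', V⟩, hYV, hp', hVZ⟩
      simp only at hp' hYV hVZ
      subst hp'
      have key : ∀ z, z ∈ Z → ∃ a, (max p' q, a) ∈ X ∧ leA z a := by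
        intro z hz
        obtain ⟨a, haV, hza⟩ := hVZ z hz
        obtain ⟨u, huY, hu1, hau⟩ := hYV (q, a) haV
        obtain ⟨x, hxX, hx1, hux⟩ := hXY (p', u) huY
        refine ⟨x.2, ?_, Atr _ _ _ hza (Atr _ _ _ hau hux)⟩
        have hx1' : x.1 = max p' u.1 := hx1
        have hu1' : q = u.1 := hu1
        rw [← hu1'] at hx1'
        exact mem_of_fst_eq hxX hx1'
      choose f hf1 hf2 using key
      refine ⟨(max p' q, Z.attach.image fun z => f z.1 z.2), ?_, rfl, ?_⟩
      · intro a' ha'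
        obtain ⟨⟨z, hz⟩, -, rfl⟩ := Finset.mem_image.mp ha'
        exact ⟨f z hz, hf1 z hz, Arf _⟩
      · intro z hz
        exact ⟨f z hz, Finset.mem_image.mpr ⟨⟨z, hz⟩, Finset.mem_attach _ _, rfl⟩,
          hf2 z hz⟩
    · rintro ⟨⟨r, W⟩, hXW, hr, hZW⟩
      simp only at hr hXW hZW
      subst hr
      have key : ∀ z, z ∈ Z → ∃ a, (max p q, a) ∈ X ∧ leA z a := by
        intro z hz
        obtain ⟨w, hwW, hzw⟩ := hZW z hz
        obtain ⟨a, haX, hwa⟩ := hXW w hwW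
        exact ⟨a, haX, Atr _ _ _ hzw hwa⟩
      choose f hf1 hf2 using key
      refine ⟨Z.attach.image fun z => (p, (q, f z.1 z.2)), ?_,
        (p, Z.attach.image fun z => (q, f z.1 z.2)), ?_, rfl, ?_⟩
      · intro y hy
        obtain ⟨⟨z, hz⟩, -, rfl⟩ := Finset.mem_image.mp hy
        exact ⟨(max p q, f z hz), hf1 z hz, rfl, Arf _⟩
      · intro v hv
        obtain ⟨⟨z, hz⟩, -, rfl⟩ := Finset.mem_image.mp hv
        exact ⟨(q, f z hz),
          Finset.mem_image.mpr ⟨⟨z, hz⟩, Finset.mem_attach _ _, rfl⟩, rfl, Arf _⟩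
      · intro z hz
        exact ⟨f z hz, Finset.mem_image.mpr ⟨⟨z, hz⟩, Finset.mem_attach _ _, rfl⟩,
          hf2 z hz⟩
  -- Part 5: comultiplication of P_fin
  · funext X z
    obtain ⟨q, Zs⟩ := z
    apply propext
    simp only [rcomp, pdelta, pLE, pmap, lamDL, bmap, bLE]
    constructor
    · rintro ⟨Ys, hXY, Vs, hYV, hVZ⟩
      have key : ∀ z, z ∈ Zs.biUnion id → ∃ a, (q, a) ∈ X ∧ leA z a := by
        intro z hz
        rw [Finset.mem_biUnion] at hz
        obtain ⟨Zz, hZz, hzZ⟩ := hz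
        obtain ⟨W, hWV, hZW⟩ := hVZ Zz hZz
        obtain ⟨w, hwW, hzw⟩ := hZW z hzZ
        obtain ⟨Y, hYYs, hYW⟩ := hYV (q, W) hWV
        obtain ⟨a, haY, hwa⟩ := hYW w hwW
        have haU : (q, a) ∈ Ys.biUnion id := Finset.mem_biUnion.mpr ⟨Y, hYYs, haY⟩
        obtain ⟨x, hxX, hx1, hax⟩ := hXY (q, a) haU
        have hx1' : x.1 = q := hx1.symm
        refine ⟨x.2, mem_of_fst_eq hxX hx1',
          Atr _ _ _ hzw (Atr _ _ _ hwa hax)⟩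
      choose f hf1 hf2 using key
      refine ⟨(q, (Zs.biUnion id).attach.image fun z => f z.1 z.2), ?_, rfl, ?_⟩
      · intro a' ha'
        obtain ⟨⟨z, hz⟩, -, rfl⟩ := Finset.mem_image.mp ha'
        exact ⟨f z hz, hf1 z hz, Arf _⟩
      · intro z hz
        exact ⟨f z hz, Finset.mem_image.mpr ⟨⟨z, hz⟩, Finset.mem_attach _ _, rfl⟩,
          hf2 z hz⟩
    · rintro ⟨⟨p, W⟩, hXW, hpq, hUW⟩
      simp only at hpq hXW hUW
      subst hpq
      have key : ∀ z, z ∈ Zs.biUnion id → ∃ a, (p, a) ∈ X ∧ leA z a := by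
        intro z hz
        obtain ⟨w, hwW, hzw⟩ := hUW z hz
        obtain ⟨a, haX, hwa⟩ := hXW w hwW
        exact ⟨a, haX, Atr _ _ _ hzw hwa⟩
      choose f hf1 hf2 using key
      -- for each Z ∈ Zs build Y_Z and V_Z by restricting f
      refine ⟨Zs.attach.image fun Z =>
          ((Z.1.attach.image fun z => (p, f z.1
            (Finset.mem_biUnion.mpr ⟨Z.1, Z.2, z.2⟩))) : Finset (Fin (M+1) × A)),
        ?_,
        Zs.attach.image fun Z =>
          ((p, Z.1.attach.image fun z => f z.1
            (Finset.mem_biUnion.mpr ⟨Z.1, Z.2, z.2⟩)) : Fin (M+1) × Finset A),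
        ?_, ?_⟩
      · intro y hy
        rw [Finset.mem_biUnion] at hy
        obtain ⟨Y, hYmem, hyY⟩ := hy
        obtain ⟨⟨Z, hZ⟩, -, rfl⟩ := Finset.mem_image.mp hYmem
        simp only [id] at hyY
        obtain ⟨⟨z, hz⟩, -, rfl⟩ := Finset.mem_image.mp hyY
        exact ⟨(p, f z _), hf1 z _, rfl, Arf _⟩
      · intro v hv
        obtain ⟨⟨Z, hZ⟩, -, rfl⟩ := Finset.mem_image.mp hv
        refine ⟨Z.attach.image fun z => (p, f z.1
            (Finset.mem_biUnion.mpr ⟨Z, hZ, z.2⟩)),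
          Finset.mem_image.mpr ⟨⟨Z, hZ⟩, Finset.mem_attach _ _, rfl⟩, ?_⟩
        intro a' ha'
        obtain ⟨⟨z, hz⟩, -, rfl⟩ := Finset.mem_image.mp ha'
        exact ⟨f z _, Finset.mem_image.mpr ⟨⟨z, hz⟩, Finset.mem_attach _ _, rfl⟩,
          Arf _⟩
      · intro Z hZ
        refine ⟨Z.attach.image fun z => f z.1
            (Finset.mem_biUnion.mpr ⟨Z, hZ, z.2⟩),
          Finset.mem_image.mpr ⟨⟨Z, hZ⟩, Finset.mem_attach _ _, rfl⟩, ?_⟩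
        intro z hz
        exact ⟨f z _, Finset.mem_image.mpr ⟨⟨z, hz⟩, Finset.mem_attach _ _, rfl⟩,
          hf2 z _⟩
end
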